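/- Let m be a positive integer and let ε₁, ε₂, ε₃ ∈ {+1, −1}. Then the sum, over all index-m subgroups Λ of ℤ × ℤ, of the product Π_{i : Λ ⊆ Λᵢ} εᵢ (an empty product being 1) equals σ(m) + (ε₁+ε₂+ε₃ − 3)·σ(m/2) + (ε₁ε₂ε₃ − (ε₁+ε₂+ε₃) + 2)·σ(m/4), where σ(m/2) = 0 if m is odd and σ(m/4) = 0 if 4 does not divide m. -/

import Mathlib

/-!
Write each factor as `1 + (εᵢ - 1)·[Λ ≤ Λᵢ]`. Any two of the `Λᵢ` meet in `2ℤ × 2ℤ`, which lies in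
all three, so expanding the product turns the signed sum into
`N(ℤ²) + Σᵢ (εᵢ - 1) N(Λᵢ) + (ε₁ε₂ε₃ - Σᵢ εᵢ + 2) N(2ℤ × 2ℤ)`, where `N(K)` counts the index-`m`
subgroups contained in `K`. A subgroup `K` of index `k` is again a copy of `ℤ²` whose index-`m/k`
subgroups are exactly the index-`m` subgroups of `ℤ²` inside `K`, so `N(K) = σ(m/k)`. Finally
`N(ℤ²) = σ(m)` by the Hermite normal form: the index-`m` subgroups are the lattices spanned by
`(a, 0)` and `(b, d)` with `a * d = m` and `0 ≤ b < a`, and there are `Σ_{a ∣ m} a` of them.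
-/

/-- `Λ₁ = {(x,y) ∈ ℤ × ℤ : y is even}`. -/
def Lambda1 : AddSubgroup (ℤ × ℤ) where
  carrier := {p : ℤ × ℤ | 2 ∣ p.2}
  zero_mem' := dvd_zero 2
  add_mem' := fun ha hb => dvd_add ha hb
  neg_mem' := fun ha => dvd_neg.mpr ha

/-- `Λ₂ = {(x,y) ∈ ℤ × ℤ : x is even}`. -/
def Lambda2 : AddSubgroup (ℤ × ℤ) where
  carrier := {p : ℤ × ℤ | 2 ∣ p.1}
  zero_mem' := dvd_zero 2
  add_mem' := fun ha hb => dvd_add ha hb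
  neg_mem' := fun ha => dvd_neg.mpr ha

/-- `Λ₃ = {(x,y) ∈ ℤ × ℤ : x ≡ y (mod 2)}`. -/
def Lambda3 : AddSubgroup (ℤ × ℤ) where
  carrier := {p : ℤ × ℤ | p.1 ≡ p.2 [ZMOD 2]}
  zero_mem' := Int.ModEq.refl 0
  add_mem' := fun ha hb => Int.ModEq.add ha hb
  neg_mem' := fun ha => Int.ModEq.neg ha

/-- The three index-2 subgroups, indexed by `Fin 3`. -/
def L : Fin 3 → AddSubgroup (ℤ × ℤ) := ![Lambda1, Lambda2, Lambda3]

open scoped Classical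

theorem AddMonoidHom.index_range_eq_natAbs_det {M : Type*} [AddCommGroup M] [Module.Free ℤ M]
    [Module.Finite ℤ M] {f : M →+ M} (hf : Function.Injective f) :
    f.range.index = (LinearMap.det f.toIntLinearMap).natAbs :=
  (Submodule.natAbs_det_equiv f.range.toIntSubmodule (AddMonoidHom.ofInjective hf)).symm

theorem AddSubgroup.ncard_setOf_index_eq_mul_le_range {G H : Type*} [AddGroup G] [AddGroup H]
    {f : H →+ G} (hf : Function.Injective f) (hk : f.range.index ≠ 0) (n : ℕ) :
    {Λ : AddSubgroup G | Λ.index = n * f.range.index ∧ Λ ≤ f.range}.ncard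
      = {K : AddSubgroup H | K.index = n}.ncard := by
  rw [← Set.ncard_image_of_injective _ (AddSubgroup.map_injective hf)]
  congr 1
  ext Λ
  simp only [Set.mem_image, Set.mem_ofPred_eq]
  constructor
  · rintro ⟨hΛ, hle⟩
    refine ⟨Λ.comap f, ?_, AddSubgroup.map_comap_eq_self hle⟩
    rw [← AddSubgroup.map_comap_eq_self hle, AddSubgroup.index_map_of_injective _ hf] at hΛ
    exact Nat.eq_of_mul_eq_mul_right (Nat.pos_of_ne_zero hk) hΛ
  · rintro ⟨K, rfl, rfl⟩
    exact ⟨K.index_map_of_injective hf, AddSubgroup.map_le_range f K⟩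

theorem Int.exists_mem_iff_natCast_dvd (H : AddSubgroup ℤ) :
    ∃ n : ℕ, ∀ x, x ∈ H ↔ (n : ℤ) ∣ x := by
  obtain ⟨a, rfl⟩ := Int.subgroup_cyclic H
  refine ⟨a.natAbs, fun x => ?_⟩
  rw [← AddSubgroup.zmultiples_eq_closure, ← Int.zmultiples_natAbs, Int.mem_zmultiples_iff]

theorem finsum_mem_ite_eq_mul_ncard {α : Type*} {s : Set α} (hs : s.Finite) (p : α → Prop)
    [DecidablePred p] (c : ℤ) :
    ∑ᶠ x ∈ s, (if p x then c else 0) = c * {x | x ∈ s ∧ p x}.ncard := by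
  rw [finsum_mem_eq_finite_toFinset_sum _ hs, ← Finset.sum_filter, Finset.sum_const,
    nsmul_eq_mul, mul_comm, ← Set.ncard_coe_finset, Finset.coe_filter]
  simp only [Set.Finite.mem_toFinset]

theorem finsum_mem_one_eq_ncard {α : Type*} {s : Set α} (hs : s.Finite) :
    ∑ᶠ _ ∈ s, (1 : ℤ) = s.ncard := by
  rw [finsum_mem_eq_finite_toFinset_sum _ hs, Finset.sum_const, Set.ncard_eq_toFinset_card _ hs,
    nsmul_one]

theorem prod_ite_eq_one_add_sum_add_ite (p : Fin 3 → Prop) [DecidablePred p] (q : Prop)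
    [Decidable q] (hpq : ∀ i j, i ≠ j → p i → p j → q) (hqp : q → ∀ i, p i) (ε : Fin 3 → ℤ) :
    ∏ i, (if p i then ε i else 1)
      = 1 + ∑ i, (if p i then ε i - 1 else 0)
        + if q then ε 0 * ε 1 * ε 2 - (ε 0 + ε 1 + ε 2) + 2 else 0 := by
  rw [Fin.prod_univ_three, Fin.sum_univ_three]
  by_cases hq : q
  · simp only [hqp hq, hq, if_true]
    ring
  · have h01 := fun h0 h1 => hq (hpq 0 1 (by decide) h0 h1)
    have h02 := fun h0 h2 => hq (hpq 0 2 (by decide) h0 h2)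
    have h12 := fun h1 h2 => hq (hpq 1 2 (by decide) h1 h2)
    by_cases h0 : p 0 <;> by_cases h1 : p 1 <;> by_cases h2 : p 2 <;> simp_all

def hermiteHom (a b d : ℕ) : (ℤ × ℤ) →+ (ℤ × ℤ) where
  toFun p := (p.1 * a + p.2 * b, p.2 * d)
  map_zero' := by simp
  map_add' p q := by ext <;> simp <;> ring

def hermiteLattice (a b d : ℕ) : AddSubgroup (ℤ × ℤ) := (hermiteHom a b d).range

section Hermite

variable {a b d : ℕ}

theorem mem_hermiteLattice {p : ℤ × ℤ} :
    p ∈ hermiteLattice a b d ↔ ∃ s t : ℤ, p.1 = s * a + t * b ∧ p.2 = t * d := by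
  constructor
  · rintro ⟨⟨s, t⟩, rfl⟩
    exact ⟨s, t, rfl, rfl⟩
  · rintro ⟨s, t, h1, h2⟩
    exact ⟨(s, t), Prod.ext h1.symm h2.symm⟩

theorem hermiteLattice_le {Λ : AddSubgroup (ℤ × ℤ)} (ha : ((a : ℤ), (0 : ℤ)) ∈ Λ)
    (hbd : ((b : ℤ), (d : ℤ)) ∈ Λ) : hermiteLattice a b d ≤ Λ := by
  rintro _ ⟨⟨s, t⟩, rfl⟩
  have : hermiteHom a b d (s, t) = s • ((a : ℤ), (0 : ℤ)) + t • ((b : ℤ), (d : ℤ)) := by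
    ext <;> simp [hermiteHom]
  rw [this]
  exact Λ.add_mem (Λ.zsmul_mem ha s) (Λ.zsmul_mem hbd t)

theorem hermiteHom_injective (ha : a ≠ 0) (hd : d ≠ 0) : Function.Injective (hermiteHom a b d) := by
  rintro ⟨s, t⟩ ⟨s', t'⟩ h
  simp only [hermiteHom, AddMonoidHom.coe_mk, ZeroHom.coe_mk, Prod.mk.injEq] at h
  have ht : t = t' := mul_right_cancel₀ (by exact_mod_cast hd) h.2
  subst ht
  have hs : s * a = s' * a := by linarith [h.1]
  rw [mul_right_cancel₀ (by exact_mod_cast ha) hs]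

theorem det_hermiteHom (a b d : ℕ) :
    LinearMap.det (hermiteHom a b d).toIntLinearMap = a * d := by
  rw [← LinearMap.det_toMatrix (Module.Basis.finTwoProd ℤ), Matrix.det_fin_two]
  simp [LinearMap.toMatrix_apply, hermiteHom]

theorem index_hermiteLattice (ha : a ≠ 0) (hd : d ≠ 0) : (hermiteLattice a b d).index = a * d := by
  rw [hermiteLattice, AddMonoidHom.index_range_eq_natAbs_det (hermiteHom_injective ha hd),
    det_hermiteHom]
  exact Int.natAbs_natCast _

theorem mk_zero_mem_hermiteLattice_iff (hd : d ≠ 0) {x : ℤ} :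
    (x, 0) ∈ hermiteLattice a b d ↔ (a : ℤ) ∣ x := by
  rw [mem_hermiteLattice]
  constructor
  · rintro ⟨s, t, hx, ht⟩
    obtain rfl : t = 0 := by simpa [hd] using ht.symm
    exact ⟨s, by simp only at hx; rw [hx]; ring⟩
  · rintro ⟨s, rfl⟩
    exact ⟨s, 0, by ring, by ring⟩

theorem exists_mk_mem_hermiteLattice_iff {y : ℤ} :
    (∃ x, (x, y) ∈ hermiteLattice a b d) ↔ (d : ℤ) ∣ y := by
  simp only [mem_hermiteLattice]
  constructor
  · rintro ⟨x, s, t, -, rfl⟩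
    exact ⟨t, by ring⟩
  · rintro ⟨t, rfl⟩
    exact ⟨t * b, 0, t, by ring, by ring⟩

theorem eq_of_hermiteLattice_eq {a' b' d' : ℕ} (hd : d ≠ 0) (hd' : d' ≠ 0) (hb : b < a)
    (hb' : b' < a') (h : hermiteLattice a b d = hermiteLattice a' b' d') :
    a = a' ∧ b = b' ∧ d = d' := by
  have hA : ∀ x : ℤ, (a : ℤ) ∣ x ↔ (a' : ℤ) ∣ x := fun x => by
    rw [← mk_zero_mem_hermiteLattice_iff hd, ← mk_zero_mem_hermiteLattice_iff hd', h]
  have hD : ∀ y : ℤ, (d : ℤ) ∣ y ↔ (d' : ℤ) ∣ y := fun y => by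
    rw [← exists_mk_mem_hermiteLattice_iff, ← exists_mk_mem_hermiteLattice_iff, h]
  obtain rfl : a = a' := Int.natCast_dvd_natCast.mp ((hA _).mpr dvd_rfl) |>.antisymm
    (Int.natCast_dvd_natCast.mp ((hA _).mp dvd_rfl))
  obtain rfl : d = d' := Int.natCast_dvd_natCast.mp ((hD _).mpr dvd_rfl) |>.antisymm
    (Int.natCast_dvd_natCast.mp ((hD _).mp dvd_rfl))
  refine ⟨rfl, ?_, rfl⟩
  have hmem : ((b : ℤ), (d : ℤ)) ∈ hermiteLattice a b' d :=
    h ▸ mem_hermiteLattice.mpr ⟨0, 1, by ring, by ring⟩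
  obtain ⟨s, t, hx, hy⟩ := mem_hermiteLattice.mp hmem
  obtain rfl : t = 1 := by
    have : (t - 1) * d = 0 := by simp only at hy; linarith
    simpa [hd, sub_eq_zero] using this
  have : s = 0 := by
    simp only at hx
    rcases lt_trichotomy s 0 with hs | hs | hs
    · nlinarith
    · exact hs
    · nlinarith
  subst this
  simp only [zero_mul, zero_add, one_mul, Nat.cast_inj] at hx
  exact hx

theorem exists_eq_hermiteLattice (Λ : AddSubgroup (ℤ × ℤ)) (hΛ : Λ.index ≠ 0) :
    ∃ a b d : ℕ, a ≠ 0 ∧ d ≠ 0 ∧ b < a ∧ Λ = hermiteLattice a b d := by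
  obtain ⟨a, hinl⟩ := Int.exists_mem_iff_natCast_dvd (Λ.comap (AddMonoidHom.inl ℤ ℤ))
  obtain ⟨d, hsnd⟩ := Int.exists_mem_iff_natCast_dvd (Λ.map (AddMonoidHom.snd ℤ ℤ))
  have hA : ∀ x : ℤ, (x, 0) ∈ Λ ↔ (a : ℤ) ∣ x := hinl
  have hD : ∀ y : ℤ, (∃ x, (x, y) ∈ Λ) ↔ (d : ℤ) ∣ y := fun y => by
    simp [← hsnd]
  have hidx : ∀ g : ℤ × ℤ, Λ.index • g ∈ Λ := Λ.nsmul_index_mem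
  have ha : a ≠ 0 := by
    rintro rfl
    have := (hA Λ.index).mp (by simpa using hidx (1, 0))
    simp_all
  have hd : d ≠ 0 := by
    rintro rfl
    have := (hD Λ.index).mp ⟨0, by simpa using hidx (0, 1)⟩
    simp_all
  obtain ⟨x₀, hx₀⟩ := (hD d).mpr dvd_rfl
  set b := (x₀ % a).toNat
  have hb : (b : ℤ) = x₀ % a := Int.toNat_of_nonneg (Int.emod_nonneg _ (by exact_mod_cast ha))
  have hbd : ((b : ℤ), (d : ℤ)) ∈ Λ := by
    have : ((b : ℤ), (d : ℤ)) = (x₀, (d : ℤ)) - (a * (x₀ / a), 0) := by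
      ext
      · simp only [Prod.fst_sub, hb]; rw [Int.emod_def]
      · simp
    rw [this]
    exact Λ.sub_mem hx₀ ((hA _).mpr (dvd_mul_right _ _))
  refine ⟨a, b, d, ha, hd, ?_, le_antisymm ?_ (hermiteLattice_le ((hA _).mpr dvd_rfl) hbd)⟩
  · have := Int.emod_lt_of_pos x₀ (by omega : (0 : ℤ) < a)
    omega
  · rintro ⟨x, y⟩ hxy
    obtain ⟨t, rfl⟩ := (hD y).mp ⟨x, hxy⟩
    obtain ⟨s, hs⟩ := (hA (x - t * b)).mp (by
      simpa [sub_eq_add_neg, mul_comm] using Λ.sub_mem hxy (Λ.zsmul_mem hbd t))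
    exact mem_hermiteLattice.mpr ⟨s, t, by linarith, by ring⟩

end Hermite

/-- The Hermite normal forms `[[a, b], [0, d]]` of determinant `m`, encoded as `⟨(a, d), b⟩`. -/
def hermiteTriples (m : ℕ) : Finset (Σ _ : ℕ × ℕ, ℕ) :=
  m.divisorsAntidiagonal.sigma fun p => Finset.range p.1

theorem setOf_index_eq_image_hermiteTriples {m : ℕ} (hm : m ≠ 0) :
    {Λ : AddSubgroup (ℤ × ℤ) | Λ.index = m}
      = ((hermiteTriples m).image fun q => hermiteLattice q.1.1 q.2 q.1.2 : Set _) := by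
  ext Λ
  simp only [hermiteTriples, Set.mem_ofPred_eq, Finset.coe_image, Set.mem_image, Finset.mem_coe,
    Finset.mem_sigma, Nat.mem_divisorsAntidiagonal, Finset.mem_range]
  constructor
  · rintro rfl
    obtain ⟨a, b, d, ha, hd, hb, rfl⟩ := exists_eq_hermiteLattice Λ hm
    exact ⟨⟨(a, d), b⟩, ⟨⟨(index_hermiteLattice ha hd).symm, hm⟩, hb⟩, rfl⟩
  · rintro ⟨⟨⟨a, d⟩, b⟩, ⟨⟨rfl, had⟩, -⟩, rfl⟩
    exact index_hermiteLattice (left_ne_zero_of_mul had) (right_ne_zero_of_mul had)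

theorem finite_setOf_index_eq {m : ℕ} (hm : m ≠ 0) :
    {Λ : AddSubgroup (ℤ × ℤ) | Λ.index = m}.Finite := by
  rw [setOf_index_eq_image_hermiteTriples hm]
  exact Finset.finite_toSet _

theorem ncard_setOf_index_eq {m : ℕ} (hm : m ≠ 0) :
    {Λ : AddSubgroup (ℤ × ℤ) | Λ.index = m}.ncard = ∑ a ∈ m.divisors, a := by
  rw [setOf_index_eq_image_hermiteTriples hm, Set.ncard_coe_finset, Finset.card_image_of_injOn,
    hermiteTriples, Finset.card_sigma]
  · simp only [Finset.card_range]
    exact Nat.sum_divisorsAntidiagonal fun a _ => a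
  · rintro ⟨⟨a, d⟩, b⟩ hq ⟨⟨a', d'⟩, b'⟩ hq' h
    simp only [hermiteTriples, Finset.coe_sigma, Set.mem_sigma_iff, Finset.mem_coe,
      Nat.mem_divisorsAntidiagonal, Finset.mem_range] at hq hq'
    obtain ⟨⟨rfl, hm⟩, hb⟩ := hq
    obtain ⟨⟨had', -⟩, hb'⟩ := hq'
    obtain ⟨rfl, rfl, rfl⟩ := eq_of_hermiteLattice_eq (right_ne_zero_of_mul hm)
      (right_ne_zero_of_mul (had' ▸ hm)) hb hb' h
    rfl

theorem ncard_setOf_index_eq_and_le {K : AddSubgroup (ℤ × ℤ)} (hK : K.index ≠ 0) {m : ℕ}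
    (hm : m ≠ 0) :
    ({Λ | Λ.index = m ∧ Λ ≤ K}.ncard : ℤ)
      = if K.index ∣ m then ∑ a ∈ (m / K.index).divisors, (a : ℤ) else 0 := by
  split_ifs with hdvd
  · obtain ⟨a, b, d, ha, hd, -, rfl⟩ := exists_eq_hermiteLattice K hK
    obtain ⟨n, rfl⟩ := hdvd
    rw [mul_comm, Nat.mul_div_cancel _ (Nat.pos_of_ne_zero hK), hermiteLattice,
      AddSubgroup.ncard_setOf_index_eq_mul_le_range (hermiteHom_injective ha hd) hK,
      ncard_setOf_index_eq (right_ne_zero_of_mul hm)]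
    push_cast
    rfl
  · have : {Λ : AddSubgroup (ℤ × ℤ) | Λ.index = m ∧ Λ ≤ K} = ∅ :=
      Set.eq_empty_of_forall_notMem fun Λ ⟨hΛ, hle⟩ => hdvd (hΛ ▸ AddSubgroup.index_dvd_of_le hle)
    rw [this, Set.ncard_empty, Nat.cast_zero]

theorem mem_Lambda1 {p : ℤ × ℤ} : p ∈ Lambda1 ↔ 2 ∣ p.2 := Iff.rfl

theorem mem_Lambda2 {p : ℤ × ℤ} : p ∈ Lambda2 ↔ 2 ∣ p.1 := Iff.rfl

theorem mem_Lambda3 {p : ℤ × ℤ} : p ∈ Lambda3 ↔ p.1 % 2 = p.2 % 2 := Iff.rfl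

theorem Lambda1_eq_hermiteLattice : Lambda1 = hermiteLattice 1 0 2 := by
  ext ⟨x, y⟩
  rw [mem_Lambda1, mem_hermiteLattice]
  constructor
  · rintro ⟨t, rfl⟩
    exact ⟨x, t, by ring, by ring⟩
  · rintro ⟨s, t, -, rfl⟩
    exact ⟨t, by push_cast; ring⟩

theorem Lambda2_eq_hermiteLattice : Lambda2 = hermiteLattice 2 0 1 := by
  ext ⟨x, y⟩
  rw [mem_Lambda2, mem_hermiteLattice]
  constructor
  · rintro ⟨s, rfl⟩
    exact ⟨s, y, by push_cast; ring, by ring⟩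
  · rintro ⟨s, t, rfl, -⟩
    exact ⟨s, by push_cast; ring⟩

theorem Lambda3_eq_hermiteLattice : Lambda3 = hermiteLattice 2 1 1 := by
  ext ⟨x, y⟩
  rw [mem_Lambda3, mem_hermiteLattice]
  constructor
  · intro h
    exact ⟨(x - y) / 2, y, by push_cast; omega, by ring⟩
  · rintro ⟨s, t, rfl, rfl⟩
    push_cast
    omega

theorem index_L (i : Fin 3) : (L i).index = 2 := by
  fin_cases i <;>
  simp [L, Lambda1_eq_hermiteLattice, Lambda2_eq_hermiteLattice, Lambda3_eq_hermiteLattice,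
    index_hermiteLattice]

def evenLattice : AddSubgroup (ℤ × ℤ) := hermiteLattice 2 0 2

theorem mem_evenLattice {p : ℤ × ℤ} : p ∈ evenLattice ↔ 2 ∣ p.1 ∧ 2 ∣ p.2 := by
  rw [evenLattice, mem_hermiteLattice]
  constructor
  · rintro ⟨s, t, h1, h2⟩
    exact ⟨⟨s, by rw [h1]; push_cast; ring⟩, ⟨t, by rw [h2]; push_cast; ring⟩⟩
  · rintro ⟨⟨s, h1⟩, ⟨t, h2⟩⟩
    exact ⟨s, t, by rw [h1]; push_cast; ring, by rw [h2]; push_cast; ring⟩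

theorem index_evenLattice : evenLattice.index = 4 :=
  index_hermiteLattice two_ne_zero two_ne_zero

theorem evenLattice_le_L (i : Fin 3) : evenLattice ≤ L i := by
  intro p hp
  rw [mem_evenLattice] at hp
  fin_cases i <;> simp [L, mem_Lambda1, mem_Lambda2, mem_Lambda3] <;> omega

theorem L_inf_L_le_evenLattice {i j : Fin 3} (hij : i ≠ j) : L i ⊓ L j ≤ evenLattice := by
  rintro p ⟨hi, hj⟩
  rw [mem_evenLattice]
  fin_cases i <;> fin_cases j <;>
  simp_all [L, mem_Lambda1, mem_Lambda2, mem_Lambda3] <;> omega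

theorem prod_ite_le_L (Λ : AddSubgroup (ℤ × ℤ)) (ε : Fin 3 → ℤ) :
    ∏ i, (if Λ ≤ L i then ε i else 1)
      = 1 + ∑ i, (if Λ ≤ L i then ε i - 1 else 0)
        + if Λ ≤ evenLattice then ε 0 * ε 1 * ε 2 - (ε 0 + ε 1 + ε 2) + 2 else 0 :=
  prod_ite_eq_one_add_sum_add_ite _ _
    (fun _ _ hij hi hj => (le_inf hi hj).trans (L_inf_L_le_evenLattice hij))
    (fun h i => h.trans (evenLattice_le_L i)) ε

theorem ncard_setOf_index_eq_and_le_L (i : Fin 3) {m : ℕ} (hm : m ≠ 0) :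
    ({Λ | Λ.index = m ∧ Λ ≤ L i}.ncard : ℤ)
      = if 2 ∣ m then ∑ a ∈ (m / 2).divisors, (a : ℤ) else 0 := by
  rw [ncard_setOf_index_eq_and_le (by simp [index_L]) hm, index_L]

theorem ncard_setOf_index_eq_and_le_evenLattice {m : ℕ} (hm : m ≠ 0) :
    ({Λ | Λ.index = m ∧ Λ ≤ evenLattice}.ncard : ℤ)
      = if 4 ∣ m then ∑ a ∈ (m / 4).divisors, (a : ℤ) else 0 := by
  rw [ncard_setOf_index_eq_and_le (by simp [index_evenLattice]) hm, index_evenLattice]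

theorem stmt12_general (m : ℕ) (hm : 0 < m) (ε : Fin 3 → ℤ) :
    (∑ᶠ Λ ∈ {Λ : AddSubgroup (ℤ × ℤ) | Λ.index = m},
        ∏ i : Fin 3, if Λ ≤ L i then ε i else 1)
      = (∑ a ∈ m.divisors, (a : ℤ))
        + (ε 0 + ε 1 + ε 2 - 3)
            * (if 2 ∣ m then ∑ a ∈ (m / 2).divisors, (a : ℤ) else 0)
        + (ε 0 * ε 1 * ε 2 - (ε 0 + ε 1 + ε 2) + 2)
            * (if 4 ∣ m then ∑ a ∈ (m / 4).divisors, (a : ℤ) else 0) := by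
  have hS := finite_setOf_index_eq hm.ne'
  rw [finsum_mem_congr rfl fun Λ _ => prod_ite_le_L Λ ε]
  simp only [Fin.sum_univ_three, finsum_mem_add_distrib hS, finsum_mem_one_eq_ncard hS,
    finsum_mem_ite_eq_mul_ncard hS]
  simp only [Set.mem_ofPred_eq, ncard_setOf_index_eq hm.ne', ncard_setOf_index_eq_and_le_L _ hm.ne',
    ncard_setOf_index_eq_and_le_evenLattice hm.ne', Nat.cast_sum]
  ring

/-- For signs `ε₁, ε₂, ε₃ ∈ {±1}`, the sum over all index-`m`
subgroups `Λ ≤ ℤ × ℤ` of `Π_{i : Λ ⊆ Λᵢ} εᵢ` equals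
`σ(m) + (ε₁+ε₂+ε₃−3)σ(m/2) + (ε₁ε₂ε₃−(ε₁+ε₂+ε₃)+2)σ(m/4)`
(with the convention `σ(m/k) = 0` when `k ∤ m`). -/
theorem stmt12 (m : ℕ) (hm : 0 < m) (ε : Fin 3 → ℤ)
    (hε : ∀ i, ε i = 1 ∨ ε i = -1) :
    (∑ᶠ Λ ∈ {Λ : AddSubgroup (ℤ × ℤ) | Λ.index = m},
        ∏ i : Fin 3, if Λ ≤ L i then ε i else 1)
      = (∑ a ∈ m.divisors, (a : ℤ))
        + (ε 0 + ε 1 + ε 2 - 3)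
            * (if 2 ∣ m then ∑ a ∈ (m / 2).divisors, (a : ℤ) else 0)
        + (ε 0 * ε 1 * ε 2 - (ε 0 + ε 1 + ε 2) + 2)
            * (if 4 ∣ m then ∑ a ∈ (m / 4).divisors, (a : ℤ) else 0) :=
  stmt12_general m hm ε
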